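/- Let (V,E) be a link stream, Δ > 0, and let (X,[b,e]) be a maximal Δ-clique. Then there exist distinct u, v ∈ X such that (b+Δ, u, v) ∈ E and there is no t ∈ [b, b+Δ) with (t,u,v) ∈ E. (The latest first occurrence time, over pairs of X, of a link in [b,e] is exactly b + Δ.) -/

import Mathlib

/-!
If every pair of `X` had a link in `[b, b + Δ)`, then, `X` being finite, one such link per
pair would lie in some `[b, m]` with `m < b + Δ`, and `(X, [m - Δ, e])` would be a `Δ`-clique
strictly containing `(X, [b, e])`. So some pair has no link in `[b, b + Δ)`; since the window
starting at `b` must still contain a link of that pair, the link is at `b + Δ`.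
-/

/-- A link stream has node type `α` (finite) and a finite set `E` of timed links
`(t, u, v) : ℝ × α × α`.  For a duration `Δ`, `(X, [b, e])` is a `Δ`-clique when
`2 ≤ |X|`, `b ≤ e`, and every pair of distinct nodes of `X` interacts at least once
in every window `[τ, min (τ + Δ) e]` for `τ ∈ [b, max (e - Δ) b]`. -/
def IsDeltaClique {α : Type*} (E : Finset (ℝ × α × α)) (Δ : ℝ)
    (X : Finset α) (b e : ℝ) : Prop :=
  2 ≤ X.card ∧ b ≤ e ∧
    ∀ u ∈ X, ∀ v ∈ X, u ≠ v →
      ∀ τ : ℝ, b ≤ τ → τ ≤ max (e - Δ) b →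
        ∃ t : ℝ, τ ≤ t ∧ t ≤ min (τ + Δ) e ∧ (t, u, v) ∈ E

/-- A `Δ`-clique `(X, [b, e])` is maximal if any `Δ`-clique `(X', [b', e'])` with
`X ⊆ X'` and `[b, e] ⊆ [b', e']` equals it. -/
def IsMaxDeltaClique {α : Type*} (E : Finset (ℝ × α × α)) (Δ : ℝ)
    (X : Finset α) (b e : ℝ) : Prop :=
  IsDeltaClique E Δ X b e ∧
    ∀ X' : Finset α, ∀ b' e' : ℝ,
      IsDeltaClique E Δ X' b' e' → X ⊆ X' → b' ≤ b → e ≤ e' →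
        X' = X ∧ b' = b ∧ e' = e

theorem Finset.exists_lt_forall_exists_le {ι β : Type*} [LinearOrder β] [NoMinOrder β]
    {s : Finset ι} {c : β} {P : ι → β → Prop} (h : ∀ i ∈ s, ∃ t < c, P i t) :
    ∃ m < c, ∀ i ∈ s, ∃ t ≤ m, P i t := by
  classical
  induction s using Finset.induction_on with
  | empty =>
    obtain ⟨m, hm⟩ := exists_lt c
    exact ⟨m, hm, by simp⟩
  | insert i s _ ih =>
    obtain ⟨m, hm, hs⟩ := ih fun j hj => h j (Finset.mem_insert_of_mem hj)
    obtain ⟨t, ht, hi⟩ := h i (Finset.mem_insert_self i s)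
    refine ⟨max m t, max_lt hm ht, ?_⟩
    rintro j hj
    rcases Finset.mem_insert.1 hj with rfl | hj
    · exact ⟨t, le_max_right m t, hi⟩
    · obtain ⟨t', ht', hj⟩ := hs j hj
      exact ⟨t', ht'.trans (le_max_left m t), hj⟩

section DeltaClique

variable {α : Type*} {E : Finset (ℝ × α × α)} {Δ : ℝ} {X : Finset α} {b e : ℝ}

theorem IsDeltaClique.exists_link_first_window (h : IsDeltaClique E Δ X b e) {u v : α}
    (hu : u ∈ X) (hv : v ∈ X) (huv : u ≠ v) :
    ∃ t, b ≤ t ∧ t ≤ min (b + Δ) e ∧ (t, u, v) ∈ E :=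
  h.2.2 u hu v hv huv b le_rfl (le_max_right _ _)

theorem IsDeltaClique.extend_left (h : IsDeltaClique E Δ X b e) {b' : ℝ} (hb' : b' ≤ b)
    (hlink : ∀ u ∈ X, ∀ v ∈ X, u ≠ v → ∃ t, b ≤ t ∧ t ≤ min (b' + Δ) e ∧ (t, u, v) ∈ E) :
    IsDeltaClique E Δ X b' e := by
  obtain ⟨hcard, hbe, hwin⟩ := h
  refine ⟨hcard, hb'.trans hbe, fun u hu v hv huv τ hb'τ hτ => ?_⟩
  by_cases hbτ : b ≤ τ
  · refine hwin u hu v hv huv τ hbτ ?_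
    rcases le_max_iff.1 hτ with hτ | hτ
    · exact le_max_of_le_left hτ
    · exact le_max_of_le_right (hτ.trans hb')
  · obtain ⟨t, hbt, htb', hlink⟩ := hlink u hu v hv huv
    obtain ⟨htΔ, hte⟩ := le_min_iff.1 htb'
    exact ⟨t, by linarith, le_min (by linarith) hte, hlink⟩

theorem IsMaxDeltaClique.eq_of_forall_exists_link (h : IsMaxDeltaClique E Δ X b e) {b' : ℝ}
    (hb' : b' ≤ b)
    (hlink : ∀ u ∈ X, ∀ v ∈ X, u ≠ v → ∃ t, b ≤ t ∧ t ≤ min (b' + Δ) e ∧ (t, u, v) ∈ E) :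
    b' = b :=
  (h.2 X b' e (h.1.extend_left hb' hlink) subset_rfl hb' le_rfl).2.1

end DeltaClique

theorem max_clique_latest_first_occurrence_general {α : Type*}
    (E : Finset (ℝ × α × α)) (Δ : ℝ)
    (X : Finset α) (b e : ℝ) (hmax : IsMaxDeltaClique E Δ X b e) :
    ∃ u ∈ X, ∃ v ∈ X, u ≠ v ∧ (b + Δ, u, v) ∈ E ∧
      ∀ t : ℝ, b ≤ t → t < b + Δ → (t, u, v) ∉ E := by
  classical
  by_contra! hnone
  have hearly : ∀ p ∈ X.offDiag, ∃ t < b + Δ, b ≤ t ∧ t ≤ e ∧ (t, p.1, p.2) ∈ E := by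
    rintro ⟨u, v⟩ hp
    obtain ⟨hu, hv, huv⟩ := Finset.mem_offDiag.1 hp
    obtain ⟨t, hbt, htw, hlink⟩ := hmax.1.exists_link_first_window hu hv huv
    obtain ⟨htΔ, hte⟩ := le_min_iff.1 htw
    rcases htΔ.lt_or_eq with htΔ | rfl
    · exact ⟨t, htΔ, hbt, hte, hlink⟩
    · obtain ⟨t', hbt', ht'Δ, hlink'⟩ := hnone u hu v hv huv hlink
      exact ⟨t', ht'Δ, hbt', by linarith, hlink'⟩
  obtain ⟨m, hm, hlate⟩ := Finset.exists_lt_forall_exists_le hearly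
  have hmb : m - Δ = b := hmax.eq_of_forall_exists_link (by linarith) fun u hu v hv huv => by
    obtain ⟨t, htm, hbt, hte, hlink⟩ := hlate (u, v) (Finset.mem_offDiag.2 ⟨hu, hv, huv⟩)
    exact ⟨t, hbt, le_min (by linarith) hte, hlink⟩
  linarith

/-- in a maximal `Δ`-clique `(X, [b, e])`, some pair of distinct nodes
of `X` has a link at time `b + Δ` and no link at any time in `[b, b + Δ)`. -/
theorem max_clique_latest_first_occurrence {α : Type*} [Fintype α] [DecidableEq α]
    (E : Finset (ℝ × α × α)) (Δ : ℝ) (hΔ : 0 < Δ)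
    (hsym : ∀ t u v, (t, u, v) ∈ E → (t, v, u) ∈ E)
    (hloop : ∀ t v, (t, v, v) ∉ E)
    (X : Finset α) (b e : ℝ) (hmax : IsMaxDeltaClique E Δ X b e) :
    ∃ u ∈ X, ∃ v ∈ X, u ≠ v ∧ (b + Δ, u, v) ∈ E ∧
      ∀ t : ℝ, b ≤ t → t < b + Δ → (t, u, v) ∉ E :=
  max_clique_latest_first_occurrence_general E Δ X b e hmax
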